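/- With O_k denoting the infimum over 𝔖_k of g_{S_k}, one has O_k ≤ 9/8 for all k ≥ 3, and lim_{k→∞} O_k = 9/8. -/

import Mathlib

open Finset Filter

/-- Membership in the affine set 𝔖ₖ. -/
def inSk (k : ℕ) (C : Fin k → Matrix (Fin k) (Fin k) ℝ) : Prop :=
  ∀ ℓ : Fin k,
    (∀ i : Fin k, i ≠ ℓ → ∑ j, C ℓ i j = 0) ∧
    (∀ j : Fin k, j ≠ ℓ → ∑ i, C ℓ i j = 0) ∧
    (∑ i, ∑ j, C ℓ i j = 1)

/-- A k-sample: nonempty subset of [k]×[k] with pairwise distinct second coordinates. -/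
def IsSample {k : ℕ} (s : Finset (Fin k × Fin k)) : Prop :=
  s.Nonempty ∧ ∀ p ∈ s, ∀ q ∈ s, p ≠ q → p.2 ≠ q.2

/-- g_s^{(ℓ)}(C) -/
def gPart {k : ℕ} (s : Finset (Fin k × Fin k)) (C : Fin k → Matrix (Fin k) (Fin k) ℝ)
    (ℓ : Fin k) : ℝ :=
  ∑ p ∈ s, C ℓ p.1 p.2

/-- g_s(C) -/
def gSample {k : ℕ} (s : Finset (Fin k × Fin k)) (C : Fin k → Matrix (Fin k) (Fin k) ℝ) : ℝ :=
  ∑ ℓ : Fin k, |gPart s C ℓ|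

/-- g_{S_k}(C) : the maximum of g_s(C) over all k-samples s. -/
noncomputable def gMax (k : ℕ) (C : Fin k → Matrix (Fin k) (Fin k) ℝ) : ℝ :=
  ⨆ s : {s : Finset (Fin k × Fin k) // IsSample s}, gSample s.1 C

/-- multiplicity of ℓ in the multiset of coordinates of elements of s -/
def mult {k : ℕ} (s : Finset (Fin k × Fin k)) (ℓ : Fin k) : ℕ :=
  (s.filter (fun p => p.1 = ℓ)).card + (s.filter (fun p => p.2 = ℓ)).card

/-- β(s): number of distinct indices among coordinates of s -/
def beta {k : ℕ} (s : Finset (Fin k × Fin k)) : ℕ :=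
  (s.image Prod.fst ∪ s.image Prod.snd).card

/-- γ(s): number of diagonal elements of s -/
def gamma {k : ℕ} (s : Finset (Fin k × Fin k)) : ℕ :=
  (s.filter (fun p => p.1 = p.2)).card

/-- the strong homogeneous flow C*_k -/
noncomputable def Cstar (k : ℕ) : Fin k → Matrix (Fin k) (Fin k) ℝ :=
  fun ℓ i j =>
    if i = ℓ ∧ j = ℓ then 2/(k:ℝ) - 1/(k:ℝ)^2
    else if i = ℓ ∨ j = ℓ then 1/(k:ℝ) - 1/(k:ℝ)^2
    else -1/(k:ℝ)^2

/-- the Sym(k)-invariant tuple with parameters x (i=j=ℓ), y (i=j≠ℓ),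
a (exactly one of i,j equals ℓ), b (otherwise) -/
def Cfix (k : ℕ) (x y a b : ℝ) : Fin k → Matrix (Fin k) (Fin k) ℝ :=
  fun ℓ i j =>
    if i = ℓ ∧ j = ℓ then x
    else if i = j then y
    else if i = ℓ ∨ j = ℓ then a
    else b

/-- The Sym(k)-action on tuples of matrices. -/
def permAct {k : ℕ} (σ : Equiv.Perm (Fin k)) (C : Fin k → Matrix (Fin k) (Fin k) ℝ) :
    Fin k → Matrix (Fin k) (Fin k) ℝ :=
  fun ℓ i j => C (σ⁻¹ ℓ) (σ⁻¹ i) (σ⁻¹ j)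

/-- optimal value O_k -/
noncomputable def Ovalue (k : ℕ) : ℝ := sInf {y | ∃ C, inSk k C ∧ gMax k C = y}


/-!
Upper bound: for `C*_k` one has `g_s^{(ℓ)}(C*_k) = (m_ℓ k - |s|) / k²`, where `m_ℓ` is the
multiplicity of `ℓ` among the coordinates of `s`. Since `m_ℓ ≥ 1` for the `|s|` distinct second
coordinates, summing absolute values gives `g_s(C*_k) ≤ |s| (3k - 2|s|) / k² ≤ 9/8`.

Lower bound: `g_s(C) ≥ 2 ∑_{ℓ ∈ T} g_s^{(ℓ)}(C) - ∑_ℓ g_s^{(ℓ)}(C)` for every `T ⊆ [k]`. Apply this to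
the diagonal samples `{(t, t) : t ∈ T}` and to the row samples `{i} × J` with `i ∈ J`, `T = J`, and
average over a random subset containing each index independently with probability `p`
(resp. `3/4`). Using the constraints of `𝔖_k`, every average is a linear combination of `k`,
`D = ∑_ℓ ∑_i c^{(ℓ)}_{ii}` and `E = ∑_ℓ c^{(ℓ)}_{ℓℓ}`; together with the singleton diagonal samples
one can eliminate `D` and `E` and obtains `9kp(1-p) ≤ (8kp(1-p) + 1 + kp²) g_{S_k}(C)`.
With `p = k^{-1/2}` this gives `O_k ≥ 9(√k - 1) / (8(√k - 1) + 2) → 9/8`.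
-/

lemma two_mul_sum_sub_sum_le_sum_abs {ι : Type*} [Fintype ι] (x : ι → ℝ) (T : Finset ι) :
    2 * ∑ i ∈ T, x i - ∑ i, x i ≤ ∑ i, |x i| := by
  classical
  rw [← sum_add_sum_compl T x, ← sum_add_sum_compl T fun i => |x i|]
  have hT : ∑ i ∈ T, x i ≤ ∑ i ∈ T, |x i| := sum_le_sum fun i _ => le_abs_self _
  have hTc : -∑ i ∈ Tᶜ, x i ≤ ∑ i ∈ Tᶜ, |x i| := by
    rw [← sum_neg_distrib]
    exact sum_le_sum fun i _ => neg_le_abs _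
  linarith

section CardPow

variable {α : Type*} [DecidableEq α]

lemma pow_card_pair (p : ℝ) (a b : α) :
    p ^ #{a, b} = p ^ 2 + if a = b then p - p ^ 2 else 0 := by
  by_cases h : a = b
  · simp [h]
  · simp [h, card_pair h]

lemma two_mul_three_quarters_pow_card_triple_sub (a b c : α) :
    2 * (3 / 4 : ℝ) ^ #{a, b, c} - (3 / 4) ^ #{b, c}
      = (18 + (if b = a then 18 else 0) + (if c = a then 18 else 0) + (if b = c then 6 else 0)
        - if b = a ∧ c = a then 12 else 0) / 64 := by
  by_cases hba : b = a <;> by_cases hca : c = a <;> by_cases hbc : b = c <;>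
    simp_all [card_insert_of_notMem, Ne.symm] <;> norm_num

end CardPow

section RandomSubset

variable {α : Type*} [Fintype α]

/-- The probability of `J` for a random subset of `α` that contains each point independently with
probability `p`. -/
def subsetProb (p : ℝ) (J : Finset α) : ℝ := p ^ #J * (1 - p) ^ (Fintype.card α - #J)

lemma subsetProb_nonneg {p : ℝ} (hp0 : 0 ≤ p) (hp1 : p ≤ 1) (J : Finset α) :
    0 ≤ subsetProb p J := by
  have : 0 ≤ 1 - p := by linarith
  unfold subsetProb
  positivity

lemma sum_subsetProb (p : ℝ) : ∑ J : Finset α, subsetProb p J = 1 := by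
  simp [subsetProb, Fintype.sum_pow_mul_eq_add_pow]

lemma sum_subsetProb_mul_le {p : ℝ} (hp0 : 0 ≤ p) (hp1 : p ≤ 1) {F : Finset α → ℝ} {c : ℝ}
    (hF : ∀ J, F J ≤ c) : ∑ J, subsetProb p J * F J ≤ c :=
  calc ∑ J, subsetProb p J * F J ≤ ∑ J, subsetProb p J * c :=
        sum_le_sum fun J _ => mul_le_mul_of_nonneg_left (hF J) (subsetProb_nonneg hp0 hp1 J)
    _ = c := by rw [← sum_mul, sum_subsetProb, one_mul]

variable [DecidableEq α]

lemma sum_subsetProb_superset (p : ℝ) (P : Finset α) :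
    ∑ J with P ⊆ J, subsetProb p J = p ^ #P := by
  have h := prod_add (fun _ => p) (fun i => if i ∉ P then 1 - p else 0) univ
  have hlhs : ∏ i, (p + if i ∉ P then 1 - p else 0) = p ^ #P := by
    rw [← univ_inter P, ← prod_const, ← prod_ite_mem]
    exact prod_congr rfl fun i _ => by split_ifs <;> simp_all
  rw [hlhs, powerset_univ] at h
  rw [h, sum_filter]
  refine sum_congr rfl fun J _ => ?_
  rw [prod_const, prod_ite_zero, ← compl_eq_univ_sdiff, prod_const, card_compl]
  have hsub : (∀ i ∈ Jᶜ, i ∉ P) ↔ P ⊆ J := by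
    simp only [mem_compl]
    exact ⟨fun h i hi => by_contra fun hJ => h i hJ hi, fun h i hJ hi => hJ (h hi)⟩
  simp only [hsub, subsetProb, mul_ite, mul_zero]

lemma sum_subsetProb_mul_sum_filter {ι : Type*} [Fintype ι] (p : ℝ) (S : ι → Finset α)
    (g : ι → ℝ) :
    ∑ J, subsetProb p J * ∑ x with S x ⊆ J, g x = ∑ x, p ^ #(S x) * g x := by
  simp_rw [mul_sum]
  rw [sum_comm' (t' := univ) (s' := fun x => {J | S x ⊆ J}) (by simp)]
  simp_rw [← sum_mul, sum_subsetProb_superset]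

lemma sum_subsetProb_mul_sum_mem (p : ℝ) (f : α → ℝ) :
    ∑ J, subsetProb p J * ∑ a ∈ J, f a = ∑ a, p * f a := by
  simpa [filter_mem_eq_inter] using sum_subsetProb_mul_sum_filter p (fun a => {a}) f

lemma sum_subsetProb_mul_sum_mem_sum_mem (p : ℝ) (f : α → α → ℝ) :
    ∑ J, subsetProb p J * ∑ a ∈ J, ∑ b ∈ J, f a b = ∑ a, ∑ b, p ^ #{a, b} * f a b := by
  rw [← Fintype.sum_prod_type' (f := fun a b => p ^ #{a, b} * f a b),
    ← sum_subsetProb_mul_sum_filter p (fun x : α × α => {x.1, x.2})]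
  refine sum_congr rfl fun J _ => ?_
  rw [← sum_product']
  congr 2
  ext x
  simp [insert_subset_iff]

lemma sum_subsetProb_mul_sum_mem_sum_mem_sum_mem (p : ℝ) (f : α → α → α → ℝ) :
    ∑ J, subsetProb p J * ∑ a ∈ J, ∑ b ∈ J, ∑ c ∈ J, f a b c
      = ∑ a, ∑ b, ∑ c, p ^ #{a, b, c} * f a b c := by
  have := sum_subsetProb_mul_sum_filter p (fun x : α × α × α => {x.1, x.2.1, x.2.2})
    (fun x => f x.1 x.2.1 x.2.2)
  simp only [Fintype.sum_prod_type] at this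
  rw [← this]
  refine sum_congr rfl fun J _ => ?_
  simp_rw [← sum_product' J]
  congr 2
  ext x
  simp [insert_subset_iff]

lemma sum_subsetProb_mul_card (p : ℝ) :
    ∑ J : Finset α, subsetProb p J * #J = Fintype.card α * p := by
  simpa [mul_comm] using sum_subsetProb_mul_sum_mem p fun _ : α => (1 : ℝ)

lemma sum_subsetProb_mul_signed_pair_sum (p : ℝ) (c : α → α → ℝ) :
    ∑ T, subsetProb p T * (2 * ∑ a ∈ T, ∑ b ∈ T, c a b - ∑ a, ∑ b ∈ T, c a b)
      = p * (2 * p - 1) * ∑ a, ∑ b, c a b + 2 * p * (1 - p) * ∑ a, c a a := by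
  have hsingles : ∑ T, subsetProb p T * ∑ a, ∑ b ∈ T, c a b = ∑ a, ∑ b, p * c a b := by
    simp only [mul_sum (s := (univ : Finset α))]
    rw [sum_comm]
    simp only [← mul_sum (s := (univ : Finset α)), sum_subsetProb_mul_sum_mem]
  simp only [mul_sub, sum_sub_distrib, mul_left_comm _ (2 : ℝ), ← mul_sum,
    sum_subsetProb_mul_sum_mem_sum_mem, hsingles, pow_card_pair, add_mul, ite_mul, zero_mul,
    sum_add_distrib, sum_ite_eq, mem_univ, if_true]
  ring

/-- `p = 3/4` maximises `3p - 2p²`, the coefficient of `k` in this average divided by `p`; the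
maximum `9/8` is the limit of `O_k`. -/
lemma sum_subsetProb_three_quarters_mul_signed_row_sum (f : α → α → α → ℝ) :
    ∑ J, subsetProb (3 / 4) J *
        ∑ i ∈ J, (2 * ∑ ℓ ∈ J, ∑ j ∈ J, f ℓ i j - ∑ ℓ, ∑ j ∈ J, f ℓ i j)
      = ∑ ℓ, (18 * ∑ i, ∑ j, f ℓ i j + 18 * ∑ j, f ℓ ℓ j + 18 * ∑ i, f ℓ i ℓ
          + 6 * ∑ i, f ℓ i i - 12 * f ℓ ℓ ℓ) / 64 := by
  have hinner : ∀ J : Finset α,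
      ∑ i ∈ J, (2 * ∑ ℓ ∈ J, ∑ j ∈ J, f ℓ i j - ∑ ℓ, ∑ j ∈ J, f ℓ i j)
        = 2 * ∑ ℓ ∈ J, ∑ i ∈ J, ∑ j ∈ J, f ℓ i j - ∑ ℓ, ∑ i ∈ J, ∑ j ∈ J, f ℓ i j := fun J => by
    rw [sum_sub_distrib, ← mul_sum, sum_comm (s := J), sum_comm (s := J) (t := univ)]
  have hpairs : ∑ J, subsetProb (3 / 4) J * ∑ ℓ, ∑ i ∈ J, ∑ j ∈ J, f ℓ i j
      = ∑ ℓ, ∑ i, ∑ j, (3 / 4 : ℝ) ^ #{i, j} * f ℓ i j := by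
    simp only [mul_sum (s := (univ : Finset α))]
    rw [sum_comm]
    simp only [sum_subsetProb_mul_sum_mem_sum_mem]
  have hcoef : ∀ ℓ, 2 * ∑ i, ∑ j, (3 / 4 : ℝ) ^ #{ℓ, i, j} * f ℓ i j
        - ∑ i, ∑ j, (3 / 4 : ℝ) ^ #{i, j} * f ℓ i j
      = (18 * ∑ i, ∑ j, f ℓ i j + 18 * ∑ j, f ℓ ℓ j + 18 * ∑ i, f ℓ i ℓ + 6 * ∑ i, f ℓ i i
        - 12 * f ℓ ℓ ℓ) / 64 := fun ℓ => by
    simp only [mul_sum, ← mul_assoc, ← sum_sub_distrib, ← sub_mul,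
      two_mul_three_quarters_pow_card_triple_sub, div_mul_eq_mul_div, ← sum_div]
    congr 1
    simp only [add_mul, sub_mul, ite_mul, zero_mul, sum_add_distrib, sum_sub_distrib, ite_and,
      sum_ite_irrel, sum_const_zero, sum_ite_eq, sum_ite_eq', mem_univ, if_true, ← mul_sum]
  simp only [hinner, mul_sub, sum_sub_distrib, mul_left_comm _ (2 : ℝ), ← mul_sum,
    sum_subsetProb_mul_sum_mem_sum_mem_sum_mem, hpairs, ← hcoef]

end RandomSubset

section Samples

variable {k : ℕ}

lemma isSample_singleton_product (i : Fin k) {J : Finset (Fin k)} (hJ : J.Nonempty) :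
    IsSample ({i} ×ˢ J) := by
  refine ⟨singleton_nonempty i |>.product hJ, fun p hp q hq hpq h => hpq ?_⟩
  simp only [mem_product, mem_singleton] at hp hq
  exact Prod.ext (hp.1.trans hq.1.symm) h

lemma isSample_diag {T : Finset (Fin k)} (hT : T.Nonempty) : IsSample T.diag := by
  refine ⟨diag_nonempty.mpr hT, fun p hp q hq hpq h => hpq ?_⟩
  simp only [mem_diag] at hp hq
  exact Prod.ext (by rw [hp.2, hq.2, h]) h

lemma gPart_singleton_product (C : Fin k → Matrix (Fin k) (Fin k) ℝ) (i : Fin k)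
    (J : Finset (Fin k)) (ℓ : Fin k) : gPart ({i} ×ˢ J) C ℓ = ∑ j ∈ J, C ℓ i j := by
  simp [gPart]

lemma gPart_diag (C : Fin k → Matrix (Fin k) (Fin k) ℝ) (T : Finset (Fin k)) (ℓ : Fin k) :
    gPart T.diag C ℓ = ∑ t ∈ T, C ℓ t t := by
  simp [gPart, diag]

lemma gSample_le_gMax {s : Finset (Fin k × Fin k)} (hs : IsSample s)
    (C : Fin k → Matrix (Fin k) (Fin k) ℝ) : gSample s C ≤ gMax k C :=
  le_ciSup (f := fun t : {s : Finset (Fin k × Fin k) // IsSample s} => gSample t.1 C)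
    (Set.finite_range _).bddAbove ⟨s, hs⟩

lemma gMax_nonneg (C : Fin k → Matrix (Fin k) (Fin k) ℝ) : 0 ≤ gMax k C :=
  Real.iSup_nonneg fun _ => sum_nonneg fun _ _ => abs_nonneg _

lemma two_mul_sum_gPart_sub_sum_le_gMax {s : Finset (Fin k × Fin k)} (hs : IsSample s)
    (C : Fin k → Matrix (Fin k) (Fin k) ℝ) (T : Finset (Fin k)) :
    2 * ∑ ℓ ∈ T, gPart s C ℓ - ∑ ℓ, gPart s C ℓ ≤ gMax k C :=
  (two_mul_sum_sub_sum_le_sum_abs _ T).trans (gSample_le_gMax hs C)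

end Samples

section LowerBound

variable {k : ℕ}

lemma inSk.sum_row_self {C : Fin k → Matrix (Fin k) (Fin k) ℝ} (hC : inSk k C) (ℓ : Fin k) :
    ∑ j, C ℓ ℓ j = 1 := by
  rw [← (hC ℓ).2.2, sum_eq_single ℓ (fun i _ hi => (hC ℓ).1 i hi) (by simp)]

lemma inSk.sum_col_self {C : Fin k → Matrix (Fin k) (Fin k) ℝ} (hC : inSk k C) (ℓ : Fin k) :
    ∑ i, C ℓ i ℓ = 1 := by
  rw [← (hC ℓ).2.2, show ∑ i, ∑ j, C ℓ i j = ∑ j, ∑ i, C ℓ i j from sum_comm,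
    sum_eq_single ℓ (fun j _ hj => (hC ℓ).2.1 j hj) (by simp)]

lemma neg_sum_diag_le_gMax (C : Fin k → Matrix (Fin k) (Fin k) ℝ) :
    -∑ ℓ, ∑ i, C ℓ i i ≤ k * gMax k C := by
  have ht : ∀ t, -∑ ℓ, C ℓ t t ≤ gMax k C := fun t => by
    simpa [gPart_diag] using
      two_mul_sum_gPart_sub_sum_le_gMax (isSample_diag (singleton_nonempty t)) C ∅
  calc -∑ ℓ, ∑ i, C ℓ i i = ∑ t, -∑ ℓ, C ℓ t t := by rw [sum_comm, sum_neg_distrib]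
    _ ≤ ∑ _t : Fin k, gMax k C := sum_le_sum fun t _ => ht t
    _ = k * gMax k C := by simp

lemma diag_bound (C : Fin k → Matrix (Fin k) (Fin k) ℝ) {p : ℝ} (hp0 : 0 ≤ p) (hp1 : p ≤ 1) :
    p * (2 * p - 1) * ∑ ℓ, ∑ i, C ℓ i i + 2 * p * (1 - p) * ∑ ℓ, C ℓ ℓ ℓ ≤ gMax k C := by
  have hT : ∀ T : Finset (Fin k),
      2 * ∑ ℓ ∈ T, ∑ t ∈ T, C ℓ t t - ∑ ℓ, ∑ t ∈ T, C ℓ t t ≤ gMax k C := by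
    intro T
    rcases T.eq_empty_or_nonempty with rfl | hT
    · simpa using gMax_nonneg C
    · simpa only [gPart_diag] using two_mul_sum_gPart_sub_sum_le_gMax (isSample_diag hT) C T
  have := sum_subsetProb_mul_le hp0 hp1 hT
  rwa [sum_subsetProb_mul_signed_pair_sum p fun ℓ t => C ℓ t t] at this

lemma row_bound {C : Fin k → Matrix (Fin k) (Fin k) ℝ} (hC : inSk k C) :
    9 * k + ∑ ℓ, ∑ i, C ℓ i i - 2 * ∑ ℓ, C ℓ ℓ ℓ ≤ 8 * k * gMax k C := by
  have hJ : ∀ J : Finset (Fin k),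
      ∑ i ∈ J, (2 * ∑ ℓ ∈ J, ∑ j ∈ J, C ℓ i j - ∑ ℓ, ∑ j ∈ J, C ℓ i j) - #J * gMax k C ≤ 0 := by
    intro J
    rw [sub_nonpos, ← nsmul_eq_mul, ← sum_const]
    refine sum_le_sum fun i hi => ?_
    simpa only [gPart_singleton_product] using
      two_mul_sum_gPart_sub_sum_le_gMax (isSample_singleton_product i ⟨i, hi⟩) C J
  have hsplit : ∑ J, subsetProb (3 / 4) J *
        (∑ i ∈ J, (2 * ∑ ℓ ∈ J, ∑ j ∈ J, C ℓ i j - ∑ ℓ, ∑ j ∈ J, C ℓ i j) - #J * gMax k C)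
      = ∑ J, subsetProb (3 / 4) J *
          ∑ i ∈ J, (2 * ∑ ℓ ∈ J, ∑ j ∈ J, C ℓ i j - ∑ ℓ, ∑ j ∈ J, C ℓ i j)
        - (∑ J : Finset (Fin k), subsetProb (3 / 4) J * #J) * gMax k C := by
    rw [sum_mul, ← sum_sub_distrib]
    exact sum_congr rfl fun J _ => by ring
  have htotal : ∀ ℓ, ∑ i, ∑ j, C ℓ i j = 1 := fun ℓ => (hC ℓ).2.2
  have := sum_subsetProb_mul_le (p := 3 / 4) (by norm_num) (by norm_num) hJ
  rw [hsplit, sum_subsetProb_three_quarters_mul_signed_row_sum fun ℓ i j => C ℓ i j,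
    sum_subsetProb_mul_card, Fintype.card_fin] at this
  simp only [htotal, hC.sum_row_self, hC.sum_col_self, ← sum_div, sum_add_distrib,
    sum_sub_distrib, ← mul_sum, sum_const, card_univ, Fintype.card_fin, nsmul_eq_mul] at this
  linarith

lemma nine_mul_le_mul_gMax {C : Fin k → Matrix (Fin k) (Fin k) ℝ} (hC : inSk k C)
    {p : ℝ} (hp0 : 0 ≤ p) (hp1 : p ≤ 1) :
    9 * k * p * (1 - p) ≤ (8 * k * p * (1 - p) + 1 + k * p ^ 2) * gMax k C := by
  have hpq : 0 ≤ p * (1 - p) := mul_nonneg hp0 (by linarith)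
  linarith [mul_le_mul_of_nonneg_left (row_bound hC) hpq, diag_bound C hp0 hp1,
    mul_le_mul_of_nonneg_left (neg_sum_diag_le_gMax C) (sq_nonneg p)]

end LowerBound

section UpperBound

variable {k : ℕ}

lemma Cstar_apply (ℓ i j : Fin k) :
    Cstar k ℓ i j
      = (if i = ℓ then (1 : ℝ) / k else 0) + (if j = ℓ then (1 : ℝ) / k else 0) - 1 / k ^ 2 := by
  unfold Cstar
  by_cases hi : i = ℓ <;> by_cases hj : j = ℓ <;> simp [hi, hj] <;> ring

lemma sum_Cstar_row (ℓ i : Fin k) : ∑ j, Cstar k ℓ i j = if i = ℓ then 1 else 0 := by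
  have hk : (k : ℝ) ≠ 0 := Nat.cast_ne_zero.mpr ℓ.pos.ne'
  simp only [Cstar_apply, sum_sub_distrib, sum_add_distrib, sum_const, sum_ite_eq', mem_univ,
    if_true, card_univ, Fintype.card_fin, nsmul_eq_mul]
  split_ifs <;> field_simp <;> ring

lemma sum_Cstar_col (ℓ j : Fin k) : ∑ i, Cstar k ℓ i j = if j = ℓ then 1 else 0 := by
  have hk : (k : ℝ) ≠ 0 := Nat.cast_ne_zero.mpr ℓ.pos.ne'
  simp only [Cstar_apply, sum_sub_distrib, sum_add_distrib, sum_const, sum_ite_eq', mem_univ,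
    if_true, card_univ, Fintype.card_fin, nsmul_eq_mul]
  split_ifs <;> field_simp <;> ring

lemma inSk_Cstar (k : ℕ) : inSk k (Cstar k) := fun ℓ =>
  ⟨fun i hi => by rw [sum_Cstar_row, if_neg hi], fun j hj => by rw [sum_Cstar_col, if_neg hj],
    by simp [sum_Cstar_row]⟩

lemma sum_mult (s : Finset (Fin k × Fin k)) : ∑ ℓ, (mult s ℓ : ℝ) = 2 * #s := by
  have h1 := card_eq_sum_card_fiberwise (f := Prod.fst) (s := s) (t := univ) fun _ _ => mem_univ _
  have h2 := card_eq_sum_card_fiberwise (f := Prod.snd) (s := s) (t := univ) fun _ _ => mem_univ _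
  simp only [mult, Nat.cast_add, sum_add_distrib]
  exact_mod_cast (by omega : ∑ ℓ, #{p ∈ s | p.1 = ℓ} + ∑ ℓ, #{p ∈ s | p.2 = ℓ} = 2 * #s)

lemma gPart_Cstar (s : Finset (Fin k × Fin k)) (ℓ : Fin k) :
    gPart s (Cstar k) ℓ = mult s ℓ / k - #s / k ^ 2 := by
  simp only [gPart, Cstar_apply, sum_sub_distrib, sum_add_distrib, ← sum_filter, sum_const,
    nsmul_eq_mul, mult, Nat.cast_add]
  ring

lemma abs_gPart_Cstar_le {s : Finset (Fin k × Fin k)} (hsk : #s ≤ k) (ℓ : Fin k) :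
    |gPart s (Cstar k) ℓ|
      ≤ gPart s (Cstar k) ℓ + if ℓ ∈ s.image Prod.snd then 0 else 2 * ((#s : ℝ) / k ^ 2) := by
  have hm : (0 : ℝ) ≤ #s / k ^ 2 := by positivity
  rw [gPart_Cstar]
  split_ifs with hℓ
  · obtain ⟨p, hp, rfl⟩ := mem_image.mp hℓ
    have hk : (0 : ℝ) < k := Nat.cast_pos.mpr p.2.pos
    have hmult : (1 : ℝ) ≤ mult s p.2 := by
      have : 0 < #{q ∈ s | q.2 = p.2} := card_pos.mpr ⟨p, mem_filter.mpr ⟨hp, rfl⟩⟩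
      exact_mod_cast (by unfold mult; omega : 1 ≤ mult s p.2)
    have : (#s : ℝ) / k ^ 2 ≤ mult s p.2 / k := by
      rw [div_le_div_iff₀ (by positivity) hk]
      have : (#s : ℝ) ≤ k := by exact_mod_cast hsk
      nlinarith
    rw [abs_of_nonneg (by linarith), add_zero]
  · have : (0 : ℝ) ≤ mult s ℓ / k := by positivity
    rw [abs_le]
    constructor <;> linarith

lemma gSample_Cstar_le {s : Finset (Fin k × Fin k)} (hs : IsSample s) :
    gSample s (Cstar k) ≤ 9 / 8 := by
  obtain ⟨p₀, -⟩ := hs.1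
  have hk : (0 : ℝ) < k := Nat.cast_pos.mpr p₀.1.pos
  have hsnd : #(s.image Prod.snd) = #s :=
    card_image_of_injOn fun p hp q hq h => by_contra fun hpq => hs.2 p hp q hq hpq h
  have hsk : #s ≤ k := hsnd ▸ (card_le_univ _).trans_eq (Fintype.card_fin k)
  have hfree : #(univ \ s.image Prod.snd) = k - #s := by
    rw [card_sdiff_of_subset (subset_univ _), card_univ, Fintype.card_fin, hsnd]
  have hsum : ∑ ℓ, gPart s (Cstar k) ℓ = #s / k := by
    simp only [gPart_Cstar, sum_sub_distrib, ← sum_div, sum_mult, sum_const, card_univ,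
      Fintype.card_fin, nsmul_eq_mul]
    field_simp
    ring
  have hextra : ∑ ℓ, (if ℓ ∈ s.image Prod.snd then 0 else 2 * ((#s : ℝ) / k ^ 2) : ℝ)
      = (k - #s) * (2 * ((#s : ℝ) / k ^ 2)) := by
    rw [sum_ite, sum_const_zero, zero_add, sum_const, filter_notMem_eq_sdiff, hfree,
      nsmul_eq_mul, Nat.cast_sub hsk]
  calc gSample s (Cstar k)
      ≤ ∑ ℓ, (gPart s (Cstar k) ℓ + if ℓ ∈ s.image Prod.snd then 0 else 2 * ((#s : ℝ) / k ^ 2)) :=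
        sum_le_sum fun ℓ _ => abs_gPart_Cstar_le hsk ℓ
    _ = #s * (3 * k - 2 * #s) / k ^ 2 := by
        rw [sum_add_distrib, hsum, hextra]
        field_simp
        ring
    _ ≤ 9 / 8 := by
        rw [div_le_iff₀ (by positivity)]
        nlinarith [sq_nonneg (3 * (k : ℝ) - 4 * #s)]

lemma gMax_Cstar_le : gMax k (Cstar k) ≤ 9 / 8 :=
  Real.iSup_le (fun s => gSample_Cstar_le s.2) (by norm_num)

end UpperBound

lemma Ovalue_le_nine_div_eight (k : ℕ) : Ovalue k ≤ 9 / 8 :=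
  calc Ovalue k ≤ gMax k (Cstar k) :=
        csInf_le ⟨0, by rintro _ ⟨C, _, rfl⟩; exact gMax_nonneg C⟩ ⟨Cstar k, inSk_Cstar k, rfl⟩
    _ ≤ 9 / 8 := gMax_Cstar_le

lemma le_Ovalue (k : ℕ) {p : ℝ} (hp0 : 0 ≤ p) (hp1 : p ≤ 1) :
    9 * k * p * (1 - p) / (8 * k * p * (1 - p) + 1 + k * p ^ 2) ≤ Ovalue k := by
  refine le_csInf ⟨_, Cstar k, inSk_Cstar k, rfl⟩ ?_
  rintro _ ⟨C, hC, rfl⟩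
  have : 0 ≤ p * (1 - p) := mul_nonneg hp0 (by linarith)
  rw [div_le_iff₀ (by positivity)]
  linarith [nine_mul_le_mul_gMax hC hp0 hp1]

lemma le_Ovalue_sqrt {k : ℕ} (hk : 1 ≤ k) :
    9 * (√k - 1) / (8 * (√k - 1) + 2) ≤ Ovalue k := by
  have hs : 1 ≤ √(k : ℝ) := Real.one_le_sqrt.mpr (by exact_mod_cast hk)
  convert le_Ovalue k (p := (√k)⁻¹) (by positivity) (inv_le_one_of_one_le₀ hs) using 1
  have hsq : √(k : ℝ) ^ 2 = k := Real.sq_sqrt (Nat.cast_nonneg k)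
  set s := √(k : ℝ)
  rw [← hsq]
  field_simp
  ring

lemma tendsto_nine_mul_sqrt_sub_one_div :
    Tendsto (fun k : ℕ => 9 * (√k - 1) / (8 * (√k - 1) + 2)) atTop (nhds (9 / 8)) := by
  have hx : Tendsto (fun k : ℕ => √k - 1) atTop atTop :=
    tendsto_atTop_add_const_right _ _ (Real.tendsto_sqrt_atTop.comp tendsto_natCast_atTop_atTop)
  have hlim : Tendsto (fun x : ℝ => 9 / (8 + 2 * x⁻¹)) atTop (nhds (9 / (8 + 2 * 0))) :=
    tendsto_const_nhds.div (tendsto_const_nhds.add (tendsto_inv_atTop_zero.const_mul 2))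
      (by norm_num)
  rw [mul_zero, add_zero] at hlim
  refine (hlim.comp hx).congr' ?_
  filter_upwards [hx.eventually_gt_atTop 0] with k hk
  rw [Function.comp_apply]
  field_simp

theorem stmt7 :
    (∀ k : ℕ, 3 ≤ k → Ovalue k ≤ 9/8) ∧
    Filter.Tendsto Ovalue Filter.atTop (nhds (9/8)) :=
  ⟨fun k _ => Ovalue_le_nine_div_eight k,
    tendsto_of_tendsto_of_tendsto_of_le_of_le' tendsto_nine_mul_sqrt_sub_one_div
      tendsto_const_nhds ((eventually_ge_atTop 1).mono fun _ => le_Ovalue_sqrt)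
      (Eventually.of_forall Ovalue_le_nine_div_eight)⟩
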